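/- arXiv:1704.02668 — 5 statements merged into one kernel-verified Lean document; each statement's English description precedes it below -/
import Mathlib

section
/- Let R be a finite commutative ring with the following elementary divisor property: for every a ∈ M there exist u ∈ GL_d(R) and v ∈ GL_e(R) such that u·a·v is a diagonal matrix (i.e. its (i,j) entry vanishes whenever i ≠ j). Let M ⊆ Mat_{d×e}(R) be an R-submodule and let M^⊤ = {a^⊤ : a ∈ M} ⊆ Mat_{e×d}(R) be the module of transposes, acting on R^e. Then ask(M^⊤) = ask(M) · |R|^{e-d} (as an identity of rational numbers). -/
/-- The average size of the kernel of the elements of a set `N` of `m × n` matrices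
over a commutative ring `S`, where matrices act on row vectors by right multiplication. -/
noncomputable def ask {S : Type*} [CommRing S] {m n : Type*} [Fintype m]
    (N : Set (Matrix m n S)) : ℚ :=
  (Nat.card N : ℚ)⁻¹ *
    ∑ᶠ a : N, (Nat.card {x : m → S | Matrix.vecMul x (a : Matrix m n S) = 0} : ℚ)


section Aux


open Matrix

variable {R : Type*} [CommRing R] [Finite R]

lemma kcard_unit {m n : ℕ} (a : Matrix (Fin m) (Fin n) R)
    {u : Matrix (Fin m) (Fin m) R} {v : Matrix (Fin n) (Fin n) R}
    (hu : IsUnit u) (hv : IsUnit v) :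
    Nat.card {x : Fin m → R | vecMul x (u * a * v) = 0} =
    Nat.card {x : Fin m → R | vecMul x a = 0} := by
  obtain ⟨u', rfl⟩ := hu
  obtain ⟨v', rfl⟩ := hv
  set U : Matrix (Fin m) (Fin m) R := (u' : Matrix (Fin m) (Fin m) R) with hU
  set V : Matrix (Fin n) (Fin n) R := (v' : Matrix (Fin n) (Fin n) R) with hV
  set Ui : Matrix (Fin m) (Fin m) R := ((u'⁻¹ : _ˣ) : Matrix (Fin m) (Fin m) R) with hUi
  set Vi : Matrix (Fin n) (Fin n) R := ((v'⁻¹ : _ˣ) : Matrix (Fin n) (Fin n) R) with hVi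
  have hUUi : U * Ui = 1 := by rw [hU, hUi]; exact_mod_cast u'.mul_inv
  have hUiU : Ui * U = 1 := by rw [hU, hUi]; exact_mod_cast u'.inv_mul
  have hVVi : V * Vi = 1 := by rw [hV, hVi]; exact_mod_cast v'.mul_inv
  have key : ∀ x : Fin m → R, vecMul x (U * a * V) = 0 ↔ vecMul (vecMul x U) a = 0 := by
    intro x
    constructor
    · intro h
      have h2 : vecMul (vecMul x (U * a * V)) Vi = vecMul (0 : Fin n → R) Vi := by rw [h]
      rw [Matrix.vecMul_vecMul, Matrix.zero_vecMul, Matrix.mul_assoc, hVVi, Matrix.mul_one,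
        ← Matrix.vecMul_vecMul] at h2
      exact h2
    · intro h
      have h3 : vecMul x (U * a * V) = vecMul (vecMul (vecMul x U) a) V := by
        rw [Matrix.vecMul_vecMul, Matrix.vecMul_vecMul, Matrix.mul_assoc]
      rw [h3, h, Matrix.zero_vecMul]
  apply Nat.card_congr
  refine ⟨fun x => ⟨vecMul x.1 U, (key x.1).1 x.2⟩,
    fun y => ⟨vecMul y.1 Ui, ?_⟩, ?_, ?_⟩
  · refine (key _).2 ?_
    rw [Matrix.vecMul_vecMul, Matrix.vecMul_vecMul, ← Matrix.mul_assoc, hUiU, Matrix.one_mul]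
    exact y.2
  · intro x; ext1; simp [Matrix.vecMul_vecMul, hUUi]
  · intro y; ext1; simp [Matrix.vecMul_vecMul, hUiU]

lemma kcard_diag {m n : ℕ} (b : Matrix (Fin m) (Fin n) R)
    (hb : ∀ (i : Fin m) (j : Fin n), (i : ℕ) ≠ (j : ℕ) → b i j = 0) :
    Nat.card {x : Fin m → R | vecMul x b = 0} =
    ∏ i : Fin m, Nat.card {y : R | y * (if h : (i : ℕ) < n then b i ⟨i, h⟩ else 0) = 0} := by
  have hset : {x : Fin m → R | vecMul x b = 0} =
      {x : Fin m → R | ∀ i : Fin m, x i * (if h : (i : ℕ) < n then b i ⟨i, h⟩ else 0) = 0} := by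
    ext x
    simp only [Set.mem_setOf_eq, funext_iff, Matrix.vecMul, dotProduct, Pi.zero_apply]
    constructor
    · intro h i
      by_cases hi : (i : ℕ) < n
      · have h2 := h ⟨i, hi⟩
        rw [Finset.sum_eq_single i] at h2
        · simpa [hi] using h2
        · intro i' _ hne
          rw [hb i' ⟨i, hi⟩ (by simpa [Fin.val_eq_val] using hne), mul_zero]
        · simp
      · simp [hi]
    · intro h j
      by_cases hj : (j : ℕ) < m
      · rw [Finset.sum_eq_single ⟨(j : ℕ), hj⟩]
        · have h2 := h ⟨(j : ℕ), hj⟩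
          rw [dif_pos (show ((⟨(j : ℕ), hj⟩ : Fin m) : ℕ) < n from j.isLt)] at h2
          simpa using h2
        · intro i _ hne
          rw [hb i j (by simpa [Fin.ext_iff] using hne), mul_zero]
        · simp
      · apply Finset.sum_eq_zero
        intro i _
        rw [hb i j (by omega), mul_zero]
  rw [hset, ← Nat.card_pi]
  exact Nat.card_congr (Equiv.subtypePiEquivPi (β := fun _ : Fin m => R)
    (p := fun i y => y * (if h : (i : ℕ) < n then b i ⟨i, h⟩ else 0) = 0))

omit [Finite R] in
lemma annc_zero : Nat.card {y : R | y * (0 : R) = 0} = Nat.card R := by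
  have : {y : R | y * (0 : R) = 0} = Set.univ := by ext y; simp
  rw [this]
  exact Nat.card_congr (Equiv.Set.univ R)

lemma kcard_transpose {d e : ℕ} (a : Matrix (Fin d) (Fin e) R)
    (u : Matrix (Fin d) (Fin d) R) (v : Matrix (Fin e) (Fin e) R)
    (hu : IsUnit u) (hv : IsUnit v)
    (hd : ∀ (i : Fin d) (j : Fin e), (i : ℕ) ≠ (j : ℕ) → (u * a * v) i j = 0) :
    (Nat.card {x : Fin e → R | vecMul x aᵀ = 0} : ℚ) =
    (Nat.card {x : Fin d → R | vecMul x a = 0} : ℚ) *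
      (Nat.card R : ℚ) ^ ((e : ℤ) - (d : ℤ)) := by
  have hq0 : (Nat.card R : ℚ) ≠ 0 := by
    have : 0 < Nat.card R := Nat.card_pos
    exact_mod_cast this.ne'
  have hut : IsUnit uᵀ := by
    obtain ⟨u', rfl⟩ := hu
    exact ⟨⟨(u' : Matrix (Fin d) (Fin d) R)ᵀ, ((u'⁻¹ : _ˣ) : Matrix (Fin d) (Fin d) R)ᵀ,
      by rw [← Matrix.transpose_mul, u'.inv_mul, Matrix.transpose_one],
      by rw [← Matrix.transpose_mul, u'.mul_inv, Matrix.transpose_one]⟩, rfl⟩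
  have hvt : IsUnit vᵀ := by
    obtain ⟨v', rfl⟩ := hv
    exact ⟨⟨(v' : Matrix (Fin e) (Fin e) R)ᵀ, ((v'⁻¹ : _ˣ) : Matrix (Fin e) (Fin e) R)ᵀ,
      by rw [← Matrix.transpose_mul, v'.inv_mul, Matrix.transpose_one],
      by rw [← Matrix.transpose_mul, v'.mul_inv, Matrix.transpose_one]⟩, rfl⟩
  set b := u * a * v with hbdef
  have h1 : Nat.card {x : Fin d → R | vecMul x a = 0} =
      Nat.card {x : Fin d → R | vecMul x b = 0} := (kcard_unit a hu hv).symm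
  have h2 : Nat.card {x : Fin e → R | vecMul x aᵀ = 0} =
      Nat.card {x : Fin e → R | vecMul x bᵀ = 0} := by
    have hb : bᵀ = vᵀ * aᵀ * uᵀ := by
      rw [hbdef, Matrix.transpose_mul, Matrix.transpose_mul, Matrix.mul_assoc]
    rw [hb]
    exact (kcard_unit aᵀ hvt hut).symm
  rw [h1, h2]
  have hbt : ∀ (j : Fin e) (i : Fin d), (j : ℕ) ≠ (i : ℕ) → bᵀ j i = 0 := fun j i hne =>
    hd i j (Ne.symm hne)
  rw [kcard_diag b hd, kcard_diag bᵀ hbt]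
  set F : ℕ → ℕ := fun k =>
    if h : k < d ∧ k < e then Nat.card {y : R | y * b ⟨k, h.1⟩ ⟨k, h.2⟩ = 0} else Nat.card R
    with hF
  have hFd : ∀ i : Fin d,
      Nat.card {y : R | y * (if h : (i : ℕ) < e then b i ⟨i, h⟩ else 0) = 0} = F (i : ℕ) := by
    intro i
    simp only [hF]
    by_cases hi : (i : ℕ) < e
    · rw [dif_pos hi, dif_pos ⟨i.isLt, hi⟩]
    · rw [dif_neg hi, dif_neg (by tauto), annc_zero]
  have hFe : ∀ j : Fin e,
      Nat.card {y : R | y * (if h : (j : ℕ) < d then bᵀ j ⟨j, h⟩ else 0) = 0} = F (j : ℕ) := by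
    intro j
    simp only [hF]
    by_cases hj : (j : ℕ) < d
    · rw [dif_pos hj, dif_pos ⟨hj, j.isLt⟩]; rfl
    · rw [dif_neg hj, dif_neg (by tauto), annc_zero]
  have hFbig : ∀ k, d ≤ k ∨ e ≤ k → F k = Nat.card R := by
    intro k hk
    simp only [hF]
    rw [dif_neg (by omega)]
  have hd' : ∏ i : Fin d, Nat.card {y : R | y * (if h : (i : ℕ) < e then b i ⟨i, h⟩ else 0) = 0}
      = ∏ k ∈ Finset.range d, F k := by
    rw [Finset.prod_range fun k => F k]
    exact Finset.prod_congr rfl fun i _ => hFd i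
  have he' : ∏ j : Fin e, Nat.card {y : R | y * (if h : (j : ℕ) < d then bᵀ j ⟨j, h⟩ else 0) = 0}
      = ∏ k ∈ Finset.range e, F k := by
    rw [Finset.prod_range fun k => F k]
    exact Finset.prod_congr rfl fun j _ => hFe j
  rw [hd', he']
  -- now the numeric identity
  rcases le_total d e with hde | hed
  · have hsplit : e = d + (e - d) := by omega
    have hprod : ∏ k ∈ Finset.range e, F k
        = (∏ k ∈ Finset.range d, F k) * Nat.card R ^ (e - d) := by
      conv_lhs => rw [hsplit]
      rw [Finset.prod_range_add]
      congr 1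
      rw [Finset.prod_congr rfl fun i _ => hFbig (d + i) (Or.inl (by omega)), Finset.prod_const,
        Finset.card_range]
    rw [hprod, show ((e : ℤ) - (d : ℤ)) = ((e - d : ℕ) : ℤ) by omega, zpow_natCast]
    push_cast
    ring
  · have hsplit : d = e + (d - e) := by omega
    have hprod : ∏ k ∈ Finset.range d, F k
        = (∏ k ∈ Finset.range e, F k) * Nat.card R ^ (d - e) := by
      conv_lhs => rw [hsplit]
      rw [Finset.prod_range_add]
      congr 1
      rw [Finset.prod_congr rfl fun i _ => hFbig (e + i) (Or.inr (by omega)), Finset.prod_const,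
        Finset.card_range]
    rw [hprod, show ((e : ℤ) - (d : ℤ)) = -((d - e : ℕ) : ℤ) by omega, _root_.zpow_neg,
      zpow_natCast]
    push_cast
    have hqp : ((Nat.card R : ℚ)) ^ (d - e) ≠ 0 := pow_ne_zero _ hq0
    field_simp

end Aux

/-- If `R` is a finite commutative ring in which every element of the submodule
`M ⊆ Mat_{d×e}(R)` is equivalent to a diagonal matrix, then
`ask(M^⊤) = ask(M) · |R|^(e-d)`. -/
theorem ask_transpose {R : Type*} [CommRing R] [Finite R] {d e : ℕ}
    (M : Submodule R (Matrix (Fin d) (Fin e) R))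
    (hEDR : ∀ a ∈ M, ∃ (u : Matrix (Fin d) (Fin d) R) (v : Matrix (Fin e) (Fin e) R),
      IsUnit u ∧ IsUnit v ∧
        ∀ (i : Fin d) (j : Fin e), (i : ℕ) ≠ (j : ℕ) → (u * a * v) i j = 0) :
    ask (Matrix.transpose '' (M : Set (Matrix (Fin d) (Fin e) R))) =
      ask (M : Set (Matrix (Fin d) (Fin e) R)) * (Nat.card R : ℚ) ^ ((e : ℤ) - (d : ℤ)) := by
  classical
  have hinj : Function.Injective
      (Matrix.transpose : Matrix (Fin d) (Fin e) R → Matrix (Fin e) (Fin d) R) :=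
    fun x y h => by simpa using congrArg Matrix.transpose h
  haveI : Fintype R := Fintype.ofFinite R
  haveI F1 : Fintype ↥(M : Set (Matrix (Fin d) (Fin e) R)) := Fintype.ofFinite _
  haveI F2 : Fintype ↥(Matrix.transpose '' (M : Set (Matrix (Fin d) (Fin e) R))) :=
    Fintype.ofFinite _
  unfold ask
  rw [finsum_eq_sum_of_fintype, finsum_eq_sum_of_fintype,
    Nat.card_image_of_injective hinj]
  have hsum : (∑ a : ↥(Matrix.transpose '' (M : Set (Matrix (Fin d) (Fin e) R))),
      (Nat.card {x : Fin e → R | Matrix.vecMul x (a : Matrix (Fin e) (Fin d) R) = 0} : ℚ))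
      = ∑ a : ↥(M : Set (Matrix (Fin d) (Fin e) R)),
        (Nat.card {x : Fin d → R |
            Matrix.vecMul x (a : Matrix (Fin d) (Fin e) R) = 0} : ℚ) *
          (Nat.card R : ℚ) ^ ((e : ℤ) - (d : ℤ)) := by
    rw [← Equiv.sum_comp (Equiv.Set.image _ _ hinj)
      (fun a : ↥(Matrix.transpose '' (M : Set (Matrix (Fin d) (Fin e) R))) =>
        (Nat.card {x : Fin e → R | Matrix.vecMul x (a : Matrix (Fin e) (Fin d) R) = 0} : ℚ))]
    apply Finset.sum_congr rfl
    intro a _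
    obtain ⟨u, v, hu, hv, hdg⟩ := hEDR a a.2
    simp only [Equiv.Set.image_apply]
    exact kcard_transpose (a : Matrix (Fin d) (Fin e) R) u v hu hv hdg
  rw [hsum, ← Finset.sum_mul]
  ring
end

section
/- Let R be a commutative ring and let a, b ⊴ R be ideals with a + b = R, such that the quotient rings R/a and R/b are finite. Let M ⊆ Mat_{d×e}(R) be a finitely generated R-submodule. For an ideal c ⊴ R of finite index, let M_c denote the image of M under entrywise reduction Mat_{d×e}(R) → Mat_{d×e}(R/c). Then ask(M_{ab}) = ask(M_a) · ask(M_b), where ab denotes the product ideal. -/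
/-- The image of a module of matrices over `R` under entrywise reduction modulo an
ideal `c`. -/
def reduceMod {R : Type*} [CommRing R] {d e : ℕ}
    (M : Submodule R (Matrix (Fin d) (Fin e) R)) (c : Ideal R) :
    Set (Matrix (Fin d) (Fin e) (R ⧸ c)) :=
  (fun A : Matrix (Fin d) (Fin e) R => A.map (Ideal.Quotient.mk c)) '' (M : Set _)

/-!
By the Chinese remainder theorem `R ⧸ a * b ≃+* R ⧸ a × R ⧸ b`, and under this isomorphism
`M_{ab}` becomes all of `M_a × M_b`: for `A, B ∈ M` and `u ∈ a`, `v ∈ b` with `u + v = 1`, the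
matrix `v • A + u • B ∈ M` reduces to `A` modulo `a` and to `B` modulo `b`. The kernel of a
matrix over a product ring is the product of the kernels of its components, so the average
kernel size is multiplicative.
-/

open Matrix

section ask

variable {m n : Type*} [Fintype m]

theorem ask_image {α T : Type*} [CommRing T] {f : α → Matrix m n T}
    (hf : Function.Injective f) (N : Set α) :
    ask (f '' N) = (Nat.card N : ℚ)⁻¹ *
      ∑ᶠ A : N, (Nat.card {x : m → T | vecMul x (f A) = 0} : ℚ) := by
  rw [ask, Nat.card_image_of_injective hf,
    ← finsum_comp_equiv (Equiv.Set.image f N hf)]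
  rfl

theorem card_ker_vecMul_map_ringEquiv {S T : Type*} [CommRing S] [CommRing T]
    (φ : S ≃+* T) (A : Matrix m n S) :
    Nat.card {x : m → T | vecMul x (A.map φ) = 0} = Nat.card {x : m → S | vecMul x A = 0} := by
  refine (Nat.card_congr
    (Equiv.subtypeEquiv ((Equiv.refl m).arrowCongr φ.toEquiv) fun x => ?_)).symm
  have h : vecMul (φ ∘ x) (A.map φ) = φ ∘ vecMul x A := by
    funext j
    exact (RingHom.map_vecMul (φ : S →+* T) A x j).symm
  change _ ↔ vecMul (φ ∘ x) (A.map φ) = 0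
  rw [h]
  simp only [Set.mem_ofPred_eq, funext_iff, Function.comp_apply, Pi.zero_apply,
    map_eq_zero_iff φ φ.injective]

theorem ask_image_map_ringEquiv {S T : Type*} [CommRing S] [CommRing T]
    (φ : S ≃+* T) (N : Set (Matrix m n S)) :
    ask ((fun A : Matrix m n S => A.map φ) '' N) = ask N := by
  rw [ask_image (map_injective φ.injective)]
  simp only [card_ker_vecMul_map_ringEquiv]
  rfl

def Matrix.prodEquiv (m n S₁ S₂ : Type*) :
    Matrix m n S₁ × Matrix m n S₂ ≃ Matrix m n (S₁ × S₂) where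
  toFun p := Matrix.of fun i j => (p.1 i j, p.2 i j)
  invFun A := (A.map Prod.fst, A.map Prod.snd)
  left_inv _ := rfl
  right_inv _ := rfl

@[simp]
theorem Matrix.prodEquiv_apply {m n S₁ S₂ : Type*} (p : Matrix m n S₁ × Matrix m n S₂) (i : m)
    (j : n) : Matrix.prodEquiv m n S₁ S₂ p i j = (p.1 i j, p.2 i j) :=
  rfl

theorem vecMul_prodEquiv {S₁ S₂ : Type*} [CommRing S₁] [CommRing S₂] (x : m → S₁ × S₂)
    (A₁ : Matrix m n S₁) (A₂ : Matrix m n S₂) (j : n) :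
    vecMul x (Matrix.prodEquiv m n S₁ S₂ (A₁, A₂)) j =
      (vecMul (Prod.fst ∘ x) A₁ j, vecMul (Prod.snd ∘ x) A₂ j) := by
  ext <;> simp [vecMul, dotProduct, Prod.fst_sum, Prod.snd_sum]

theorem card_ker_vecMul_prodEquiv {S₁ S₂ : Type*} [CommRing S₁] [CommRing S₂]
    (A₁ : Matrix m n S₁) (A₂ : Matrix m n S₂) :
    Nat.card {x : m → S₁ × S₂ | vecMul x (Matrix.prodEquiv m n S₁ S₂ (A₁, A₂)) = 0} =
      Nat.card {x : m → S₁ | vecMul x A₁ = 0} * Nat.card {x : m → S₂ | vecMul x A₂ = 0} := by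
  rw [← Nat.card_prod]
  refine Nat.card_congr ((Equiv.subtypeEquiv (Equiv.arrowProdEquivProdArrow m (fun _ => S₁)
    (fun _ => S₂)) fun x => ?_).trans Equiv.subtypeProdEquivProd)
  simp only [Set.mem_ofPred_eq, funext_iff, vecMul_prodEquiv, Pi.zero_apply, Prod.ext_iff]
  exact forall_and

theorem ask_image_prodEquiv {S₁ S₂ : Type*} [CommRing S₁] [CommRing S₂] [Finite S₁]
    [Finite S₂] [Finite n] (N₁ : Set (Matrix m n S₁)) (N₂ : Set (Matrix m n S₂)) :
    ask (Matrix.prodEquiv m n S₁ S₂ '' N₁ ×ˢ N₂) = ask N₁ * ask N₂ := by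
  have : Fintype N₁ := Fintype.ofFinite _
  have : Fintype N₂ := Fintype.ofFinite _
  have hsum : ∑ᶠ p : ↥(N₁ ×ˢ N₂),
      (Nat.card {x : m → S₁ × S₂ | vecMul x (Matrix.prodEquiv m n S₁ S₂ p) = 0} : ℚ) =
      (∑ᶠ A : N₁, (Nat.card {x : m → S₁ | vecMul x (A : Matrix m n S₁) = 0} : ℚ)) *
        ∑ᶠ B : N₂, (Nat.card {x : m → S₂ | vecMul x (B : Matrix m n S₂) = 0} : ℚ) := by
    rw [← finsum_comp_equiv (Equiv.Set.prod N₁ N₂).symm, finsum_eq_sum_of_fintype,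
      finsum_eq_sum_of_fintype, finsum_eq_sum_of_fintype, Fintype.sum_prod_type,
      Finset.sum_mul_sum]
    refine Finset.sum_congr rfl fun A _ => Finset.sum_congr rfl fun B _ => ?_
    exact_mod_cast card_ker_vecMul_prodEquiv (A : Matrix m n S₁) (B : Matrix m n S₂)
  rw [ask_image (Equiv.injective _), ask, ask, hsum, Nat.card_congr (Equiv.Set.prod N₁ N₂),
    Nat.card_prod, Nat.cast_mul, mul_inv]
  ring

end ask

section crt

variable {R : Type*} [CommRing R] {a b : Ideal R}

theorem exists_mem_map_mk_eq_of_sup_eq_top {m n : Type*} (hab : a ⊔ b = ⊤)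
    (M : Submodule R (Matrix m n R)) {A B : Matrix m n R} (hA : A ∈ M) (hB : B ∈ M) :
    ∃ D ∈ M, D.map (Ideal.Quotient.mk a) = A.map (Ideal.Quotient.mk a) ∧
      D.map (Ideal.Quotient.mk b) = B.map (Ideal.Quotient.mk b) := by
  obtain ⟨u, hu, v, hv, huv⟩ := Submodule.mem_sup.mp (hab ▸ Submodule.mem_top : (1 : R) ∈ a ⊔ b)
  have hua : Ideal.Quotient.mk a u = 0 := Ideal.Quotient.eq_zero_iff_mem.mpr hu
  have hvb : Ideal.Quotient.mk b v = 0 := Ideal.Quotient.eq_zero_iff_mem.mpr hv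
  have hva : Ideal.Quotient.mk a v = 1 := by
    rw [← map_one (Ideal.Quotient.mk a), ← huv, map_add, hua, zero_add]
  have hub : Ideal.Quotient.mk b u = 1 := by
    rw [← map_one (Ideal.Quotient.mk b), ← huv, map_add, hvb, add_zero]
  refine ⟨v • A + u • B, M.add_mem (M.smul_mem v hA) (M.smul_mem u hB), ?_, ?_⟩ <;>
    ext i j <;> simp [hua, hvb, hva, hub]

theorem map_map_quotientMulEquivQuotientProd {m n : Type*} (hab : IsCoprime a b)
    (A : Matrix m n R) :
    (A.map (Ideal.Quotient.mk (a * b))).map (Ideal.quotientMulEquivQuotientProd a b hab) =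
      Matrix.prodEquiv m n _ _ (A.map (Ideal.Quotient.mk a), A.map (Ideal.Quotient.mk b)) := by
  ext i j <;> simp [Ideal.Quotient.factor_mk]

theorem image_map_quotientMulEquivQuotientProd_reduceMod {d e : ℕ} (hab : a ⊔ b = ⊤)
    (M : Submodule R (Matrix (Fin d) (Fin e) R)) :
    (fun A => A.map (Ideal.quotientMulEquivQuotientProd a b (Ideal.isCoprime_iff_sup_eq.mpr hab)))
        '' reduceMod M (a * b) =
      Matrix.prodEquiv _ _ _ _ '' reduceMod M a ×ˢ reduceMod M b := by
  have hcrt : (fun A : Matrix (Fin d) (Fin e) R =>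
      (A.map (Ideal.Quotient.mk a), A.map (Ideal.Quotient.mk b))) '' (M : Set _) =
      reduceMod M a ×ˢ reduceMod M b := by
    ext ⟨P, Q⟩
    constructor
    · rintro ⟨A, hA, hPQ⟩
      obtain ⟨rfl, rfl⟩ := Prod.mk.inj hPQ
      exact ⟨⟨A, hA, rfl⟩, ⟨A, hA, rfl⟩⟩
    · rintro ⟨⟨A, hA, rfl⟩, ⟨B, hB, rfl⟩⟩
      obtain ⟨D, hD, hDa, hDb⟩ := exists_mem_map_mk_eq_of_sup_eq_top hab M hA hB
      exact ⟨D, hD, Prod.ext hDa hDb⟩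
  rw [← hcrt, reduceMod, Set.image_image, Set.image_image]
  simp only [map_map_quotientMulEquivQuotientProd]

end crt

theorem ask_reduceMod_mul_general {R : Type*} [CommRing R] {d e : ℕ}
    (a b : Ideal R) (hab : a ⊔ b = ⊤) [Finite (R ⧸ a)] [Finite (R ⧸ b)]
    (M : Submodule R (Matrix (Fin d) (Fin e) R)) :
    ask (reduceMod M (a * b)) = ask (reduceMod M a) * ask (reduceMod M b) := by
  rw [← ask_image_map_ringEquiv (Ideal.quotientMulEquivQuotientProd a b
      (Ideal.isCoprime_iff_sup_eq.mpr hab)), image_map_quotientMulEquivQuotientProd_reduceMod hab,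
    ask_image_prodEquiv]

/-- For coprime ideals `a, b` of finite index of `R` and a finitely generated submodule
`M ⊆ Mat_{d×e}(R)`, one has `ask(M_{ab}) = ask(M_a) · ask(M_b)`. -/
theorem ask_reduceMod_mul {R : Type*} [CommRing R] {d e : ℕ}
    (a b : Ideal R) (hab : a ⊔ b = ⊤) [Finite (R ⧸ a)] [Finite (R ⧸ b)]
    (M : Submodule R (Matrix (Fin d) (Fin e) R)) (hM : M.FG) :
    ask (reduceMod M (a * b)) = ask (reduceMod M a) * ask (reduceMod M b) :=
  ask_reduceMod_mul_general a b hab M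
end

section
/- Let O be a discrete valuation ring with maximal ideal 𝔪, uniformizer π, finite residue field of cardinality q, and field of fractions K. Let a ∈ Mat_{d×e}(O) have rank r as a matrix over K, and suppose there are u ∈ GL_d(O), v ∈ GL_e(O), and integers 0 ≤ λ_1 ≤ ⋯ ≤ λ_r such that u·a·v is the d×e matrix with diagonal entries π^{λ_1}, …, π^{λ_r} in positions (1,1), …, (r,r) and all other entries zero. Let a_n ∈ Mat_{d×e}(O/𝔪^n) denote the entrywise reduction of a modulo 𝔪^n. Then |ker(a_n)| = q^{min(λ_1,n) + ⋯ + min(λ_r,n) + (d-r)n} and |image(a_n)| = q^{rn - (min(λ_1,n) + ⋯ + min(λ_r,n))}, where ker(a_n) = {x ∈ (O/𝔪^n)^d : x·a_n = 0} and image(a_n) = {x·a_n : x ∈ (O/𝔪^n)^d}. -/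
/-!
Reducing `u` and `v` modulo `𝔪 ^ n` gives invertible matrices over `O ⧸ 𝔪 ^ n`, so the kernel and
image of `a_n` have the sizes of those of the reduced Smith form, which acts coordinatewise as
multiplication by `π ^ λ_k`. On `O ⧸ 𝔪 ^ n`, `z * π ^ λ ∈ 𝔪 ^ n` iff `z ∈ 𝔪 ^ (n - λ)`, so that
multiplication has the kernel of `O ⧸ 𝔪 ^ n → O ⧸ 𝔪 ^ (n - λ)`, of size `q ^ min λ n`, and
hence an image of size `q ^ (n - min λ n)`; each of the `d - r` zero rows adds a free coordinate
of size `q ^ n` to the kernel.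
-/

open IsLocalRing Matrix

theorem AddMonoidHom.natCard_setOf_eq_zero_mul_natCard_range {G H : Type*} [AddGroup G]
    [AddGroup H] (f : G →+ H) :
    Nat.card {x | f x = 0} * Nat.card (Set.range f) = Nat.card G := by
  rw [← f.coe_range, SetLike.coe_sort_coe, ← AddSubgroup.index_ker]
  exact f.ker.card_mul_index

theorem Fin.prod_dite_val_lt {M : Type*} [CommMonoid M] {r d : ℕ} (hrd : r ≤ d)
    (f : Fin r → M) (g : M) :
    ∏ i : Fin d, (if h : (i : ℕ) < r then f ⟨i, h⟩ else g) = (∏ k, f k) * g ^ (d - r) := by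
  obtain ⟨s, rfl⟩ := Nat.exists_eq_add_of_le hrd
  simp [Fin.prod_univ_add]

namespace IsDiscreteValuationRing

variable {O : Type*} [CommRing O] [IsDomain O] [IsDiscreteValuationRing O]

local notation "𝔪" => IsLocalRing.maximalIdeal O

theorem natCard_quotient_maximalIdeal_pow (k : ℕ) :
    Nat.card (O ⧸ 𝔪 ^ k) = Nat.card (ResidueField O) ^ k := by
  simpa [Submodule.cardQuot_apply, ResidueField] using
    cardQuot_pow_of_prime (not_a_field O) (i := k)

variable {π : O} (hπ : Irreducible π)
include hπ

theorem mul_pow_mem_maximalIdeal_pow_iff (z : O) (l n : ℕ) :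
    z * π ^ l ∈ 𝔪 ^ n ↔ z ∈ 𝔪 ^ (n - l) := by
  simp only [(irreducible_iff_uniformizer π).mp hπ, Ideal.span_singleton_pow,
    Ideal.mem_span_singleton]
  rcases le_total l n with hln | hnl
  · conv_lhs => rw [← Nat.sub_add_cancel hln, pow_add]
    exact mul_dvd_mul_iff_right (pow_ne_zero l hπ.ne_zero)
  · simp [Nat.sub_eq_zero_of_le hnl, (pow_dvd_pow π hnl).mul_left]

theorem mul_mk_pow_eq_zero_iff (l n : ℕ) (y : O ⧸ 𝔪 ^ n) :
    y * Ideal.Quotient.mk _ (π ^ l) = 0 ↔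
      Ideal.Quotient.factor (Ideal.pow_le_pow_right (Nat.sub_le n l)) y = 0 := by
  obtain ⟨z, rfl⟩ := Ideal.Quotient.mk_surjective y
  rw [← map_mul, Ideal.Quotient.factor_mk, Ideal.Quotient.eq_zero_iff_mem,
    Ideal.Quotient.eq_zero_iff_mem]
  exact mul_pow_mem_maximalIdeal_pow_iff hπ z l n

variable [Finite (ResidueField O)]

theorem natCard_setOf_mul_mk_pow_eq_zero (l n : ℕ) :
    Nat.card {y : O ⧸ 𝔪 ^ n | y * Ideal.Quotient.mk _ (π ^ l) = 0} =
      Nat.card (ResidueField O) ^ min l n := by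
  set g := Ideal.Quotient.factor (Ideal.pow_le_pow_right (I := 𝔪) (Nat.sub_le n l))
  have hcard := g.toAddMonoidHom.natCard_setOf_eq_zero_mul_natCard_range
  simp only [RingHom.toAddMonoidHom_eq_coe, AddMonoidHom.coe_coe] at hcard
  rw [(Ideal.Quotient.factor_surjective _).range_eq, Nat.card_univ,
    natCard_quotient_maximalIdeal_pow, natCard_quotient_maximalIdeal_pow] at hcard
  rw [Set.ext (mul_mk_pow_eq_zero_iff hπ l n)]
  refine Nat.eq_of_mul_eq_mul_right (pow_pos Nat.card_pos _) (hcard.trans ?_)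
  rw [← pow_add]
  congr 1
  omega

theorem natCard_range_mul_mk_pow (l n : ℕ) :
    Nat.card (Set.range fun y : O ⧸ 𝔪 ^ n => y * Ideal.Quotient.mk _ (π ^ l)) =
      Nat.card (ResidueField O) ^ (n - min l n) := by
  have hcard := AddMonoidHom.natCard_setOf_eq_zero_mul_natCard_range
    (AddMonoidHom.mulRight (Ideal.Quotient.mk (𝔪 ^ n) (π ^ l)))
  simp only [AddMonoidHom.coe_mulRight, natCard_quotient_maximalIdeal_pow] at hcard
  rw [natCard_setOf_mul_mk_pow_eq_zero hπ] at hcard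
  refine Nat.eq_of_mul_eq_mul_left (pow_pos Nat.card_pos (min l n)) (hcard.trans ?_)
  rw [← pow_add]
  congr 1
  omega

end IsDiscreteValuationRing

namespace Matrix

variable {R : Type*}

def rectDiagonal [Zero R] {d e r : ℕ} (c : Fin r → R) : Matrix (Fin d) (Fin e) R :=
  fun i j => if h : (i : ℕ) = j ∧ (i : ℕ) < r then c ⟨i, h.2⟩ else 0

theorem rectDiagonal_map [Zero R] {S : Type*} [Zero S] {f : R → S} (hf : f 0 = 0) {d e r : ℕ}
    (c : Fin r → R) :
    (rectDiagonal c : Matrix (Fin d) (Fin e) R).map f = rectDiagonal (f ∘ c) := by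
  ext i j
  simp only [map_apply, rectDiagonal, apply_dite f, hf, Function.comp_apply]

section Semiring

variable [Semiring R] {m n : Type*} [Fintype m] [DecidableEq m] [Fintype n] [DecidableEq n]

theorem natCard_setOf_vecMul_units_mul_mul_eq_zero (U : (Matrix m m R)ˣ) (A : Matrix m n R)
    (V : (Matrix n n R)ˣ) :
    Nat.card {x | x ᵥ* ((U : Matrix m m R) * A * (V : Matrix n n R)) = 0} =
      Nat.card {x | x ᵥ* A = 0} := by
  let eU : (m → R) ≃ (m → R) :=
    ⟨(· ᵥ* ↑U), (· ᵥ* ↑U⁻¹), fun x => by simp [vecMul_vecMul], fun x => by simp [vecMul_vecMul]⟩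
  refine Nat.card_congr (eU.subtypeEquiv fun x => ?_)
  simp only [Set.mem_ofPred_eq, ← vecMul_vecMul]
  exact (vecMul_injective_of_isUnit V.isUnit).eq_iff' (zero_vecMul _)

theorem natCard_range_vecMul_units_mul_mul (U : (Matrix m m R)ˣ) (A : Matrix m n R)
    (V : (Matrix n n R)ˣ) :
    Nat.card (Set.range (· ᵥ* ((U : Matrix m m R) * A * (V : Matrix n n R)))) =
      Nat.card (Set.range (· ᵥ* A)) := by
  have hU : Function.Surjective (· ᵥ* (U : Matrix m m R)) := fun x =>
    ⟨x ᵥ* ↑U⁻¹, by simp [vecMul_vecMul]⟩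
  have hrange : Set.range (· ᵥ* ((U : Matrix m m R) * A * (V : Matrix n n R))) =
      (· ᵥ* (V : Matrix n n R)) '' Set.range (· ᵥ* A) := by
    rw [← Set.range_comp, ← hU.range_comp (g := (· ᵥ* (V : Matrix n n R)) ∘ (· ᵥ* A))]
    simp only [Function.comp_def, vecMul_vecMul, Matrix.mul_assoc]
  rw [hrange, Nat.card_image_of_injective (vecMul_injective_of_isUnit V.isUnit)]

end Semiring

section rectDiagonal

variable [NonUnitalNonAssocSemiring R] {d e r : ℕ}

theorem vecMul_rectDiagonal_apply (hrd : r ≤ d) (c : Fin r → R) (x : Fin d → R) (j : Fin e) :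
    (x ᵥ* rectDiagonal c) j = if h : (j : ℕ) < r then x ⟨j, h.trans_le hrd⟩ * c ⟨j, h⟩ else 0 := by
  simp only [vecMul, dotProduct, rectDiagonal]
  split_ifs with hj
  · rw [Fintype.sum_eq_single ⟨j, hj.trans_le hrd⟩]
    · simp [hj]
    · intro i hi
      rw [dif_neg, mul_zero]
      rintro ⟨h, -⟩
      exact hi (Fin.ext h)
  · refine Finset.sum_eq_zero fun i _ => ?_
    rw [dif_neg, mul_zero]
    rintro ⟨h1, h2⟩
    exact hj (h1 ▸ h2)

theorem setOf_vecMul_rectDiagonal_eq_zero (hrd : r ≤ d) (hre : r ≤ e) (c : Fin r → R) :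
    {x : Fin d → R | x ᵥ* (rectDiagonal c : Matrix (Fin d) (Fin e) R) = 0} =
      Set.univ.pi fun i : Fin d =>
        if h : (i : ℕ) < r then {y | y * c ⟨i, h⟩ = 0} else Set.univ := by
  ext x
  simp only [Set.mem_ofPred_eq, Set.mem_univ_pi, funext_iff, vecMul_rectDiagonal_apply hrd,
    Pi.zero_apply]
  constructor
  · intro hx i
    split_ifs with h
    · simpa [h] using hx ⟨i, h.trans_le hre⟩
    · trivial
  · intro hx j
    split_ifs with h
    · simpa [h] using hx ⟨j, h.trans_le hrd⟩
    · rfl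

theorem range_vecMul_rectDiagonal (hrd : r ≤ d) (hre : r ≤ e) (c : Fin r → R) :
    Set.range (· ᵥ* (rectDiagonal c : Matrix (Fin d) (Fin e) R)) =
      Set.univ.pi fun j : Fin e => if h : (j : ℕ) < r then Set.range (· * c ⟨j, h⟩) else {0} := by
  ext z
  simp only [Set.mem_range, Set.mem_univ_pi]
  constructor
  · rintro ⟨x, rfl⟩ j
    split_ifs with h
    · exact ⟨_, ((vecMul_rectDiagonal_apply hrd c x j).trans (dif_pos h)).symm⟩
    · simp [vecMul_rectDiagonal_apply hrd, h]
  · intro hz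
    have hzk (k : Fin r) : ∃ y, y * c k = z ⟨k, k.2.trans_le hre⟩ := by
      simpa using hz ⟨k, k.2.trans_le hre⟩
    choose t ht using hzk
    refine ⟨fun i => if h : (i : ℕ) < r then t ⟨i, h⟩ else 0, funext fun j => ?_⟩
    rw [vecMul_rectDiagonal_apply hrd]
    split_ifs with h
    · simpa [h] using ht ⟨j, h⟩
    · have hzj := hz j
      rw [dif_neg h] at hzj
      exact hzj.symm

theorem natCard_setOf_vecMul_rectDiagonal_eq_zero (hrd : r ≤ d) (hre : r ≤ e) (c : Fin r → R) :
    Nat.card {x : Fin d → R | x ᵥ* (rectDiagonal c : Matrix (Fin d) (Fin e) R) = 0} =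
      (∏ k, Nat.card {y | y * c k = 0}) * Nat.card R ^ (d - r) := by
  rw [setOf_vecMul_rectDiagonal_eq_zero hrd hre, Nat.card_congr (Equiv.Set.univPi _),
    Nat.card_pi]
  simp only [apply_dite (fun s : Set R => Nat.card s), Nat.card_univ]
  exact Fin.prod_dite_val_lt hrd (fun k => Nat.card {y | y * c k = 0}) (Nat.card R)

theorem natCard_range_vecMul_rectDiagonal (hrd : r ≤ d) (hre : r ≤ e) (c : Fin r → R) :
    Nat.card (Set.range (· ᵥ* (rectDiagonal c : Matrix (Fin d) (Fin e) R))) =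
      ∏ k, Nat.card (Set.range (· * c k)) := by
  rw [range_vecMul_rectDiagonal hrd hre, Nat.card_congr (Equiv.Set.univPi _), Nat.card_pi]
  simp only [apply_dite (fun s : Set R => Nat.card s), Nat.card_unique]
  rw [Fin.prod_dite_val_lt hre (fun k => Nat.card (Set.range (· * c k))) 1, one_pow, mul_one]

end rectDiagonal

end Matrix

theorem card_ker_and_image_of_smith_normal_form_general
    {O : Type*} [CommRing O] [IsDomain O] [IsDiscreteValuationRing O]
    (π : O) (hπ : Irreducible π)
    [Finite (IsLocalRing.ResidueField O)]
    (q : ℕ) (hq : Nat.card (IsLocalRing.ResidueField O) = q)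
    {d e : ℕ} (a : Matrix (Fin d) (Fin e) O) (r : ℕ)
    (hrank : (a.map (algebraMap O (FractionRing O))).rank = r)
    (lam : Fin r → ℕ)
    (u : (Matrix (Fin d) (Fin d) O)ˣ) (v : (Matrix (Fin e) (Fin e) O)ˣ)
    (hsnf : ∀ (i : Fin d) (j : Fin e),
      ((u : Matrix (Fin d) (Fin d) O) * a * (v : Matrix (Fin e) (Fin e) O)) i j =
        if h : (i : ℕ) = (j : ℕ) ∧ (i : ℕ) < r then π ^ lam ⟨(i : ℕ), h.2⟩ else 0)
    (n : ℕ) :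
    Nat.card {x : Fin d → O ⧸ IsLocalRing.maximalIdeal O ^ n |
        Matrix.vecMul x (a.map (Ideal.Quotient.mk (IsLocalRing.maximalIdeal O ^ n))) = 0} =
      q ^ ((∑ k : Fin r, min (lam k) n) + (d - r) * n) ∧
    Nat.card (Set.range (fun x : Fin d → O ⧸ IsLocalRing.maximalIdeal O ^ n =>
        Matrix.vecMul x (a.map (Ideal.Quotient.mk (IsLocalRing.maximalIdeal O ^ n))))) =
      q ^ (r * n - ∑ k : Fin r, min (lam k) n) := by
  subst hq
  have hrd : r ≤ d := by
    simpa [hrank] using (a.map (algebraMap O (FractionRing O))).rank_le_card_height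
  have hre : r ≤ e := by
    simpa [hrank] using (a.map (algebraMap O (FractionRing O))).rank_le_card_width
  set φ := Ideal.Quotient.mk (IsLocalRing.maximalIdeal O ^ n) with hφ
  let U := Units.map (φ.mapMatrix (m := Fin d)).toMonoidHom u
  let V := Units.map (φ.mapMatrix (m := Fin e)).toMonoidHom v
  have hUAV : U.val * a.map φ * V.val = rectDiagonal fun k => φ (π ^ lam k) := by
    have hsmith : (u : Matrix (Fin d) (Fin d) O) * a * (v : Matrix (Fin e) (Fin e) O) =
        rectDiagonal fun k => π ^ lam k :=
      Matrix.ext hsnf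
    change (u : Matrix (Fin d) (Fin d) O).map φ * a.map φ *
      (v : Matrix (Fin e) (Fin e) O).map φ = _
    rw [← Matrix.map_mul, ← Matrix.map_mul, hsmith, rectDiagonal_map (map_zero φ)]
    rfl
  constructor
  · rw [← natCard_setOf_vecMul_units_mul_mul_eq_zero U _ V, hUAV,
      natCard_setOf_vecMul_rectDiagonal_eq_zero hrd hre]
    simp only [hφ, IsDiscreteValuationRing.natCard_setOf_mul_mk_pow_eq_zero hπ,
      IsDiscreteValuationRing.natCard_quotient_maximalIdeal_pow]
    rw [Finset.prod_pow_eq_pow_sum, ← pow_mul, ← pow_add, mul_comm n]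
  · rw [← natCard_range_vecMul_units_mul_mul U _ V, hUAV,
      natCard_range_vecMul_rectDiagonal hrd hre]
    simp only [hφ, IsDiscreteValuationRing.natCard_range_mul_mk_pow hπ]
    rw [Finset.prod_pow_eq_pow_sum, Finset.sum_tsub_distrib _ fun k _ => min_le_right _ _]
    rw [Fin.sum_const, smul_eq_mul]

/-- Sizes of the kernel and image of the reduction modulo `𝔪^n` of a matrix over a DVR
whose Smith normal form has elementary divisors `π^(λ 1), …, π^(λ r)`. -/
theorem card_ker_and_image_of_smith_normal_form
    {O : Type*} [CommRing O] [IsDomain O] [IsDiscreteValuationRing O]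
    (π : O) (hπ : Irreducible π)
    [Finite (IsLocalRing.ResidueField O)]
    (q : ℕ) (hq : Nat.card (IsLocalRing.ResidueField O) = q)
    {d e : ℕ} (a : Matrix (Fin d) (Fin e) O) (r : ℕ)
    (hrank : (a.map (algebraMap O (FractionRing O))).rank = r)
    (lam : Fin r → ℕ) (hlam : Monotone lam)
    (u : (Matrix (Fin d) (Fin d) O)ˣ) (v : (Matrix (Fin e) (Fin e) O)ˣ)
    (hsnf : ∀ (i : Fin d) (j : Fin e),
      ((u : Matrix (Fin d) (Fin d) O) * a * (v : Matrix (Fin e) (Fin e) O)) i j =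
        if h : (i : ℕ) = (j : ℕ) ∧ (i : ℕ) < r then π ^ lam ⟨(i : ℕ), h.2⟩ else 0)
    (n : ℕ) :
    Nat.card {x : Fin d → O ⧸ IsLocalRing.maximalIdeal O ^ n |
        Matrix.vecMul x (a.map (Ideal.Quotient.mk (IsLocalRing.maximalIdeal O ^ n))) = 0} =
      q ^ ((∑ k : Fin r, min (lam k) n) + (d - r) * n) ∧
    Nat.card (Set.range (fun x : Fin d → O ⧸ IsLocalRing.maximalIdeal O ^ n =>
        Matrix.vecMul x (a.map (Ideal.Quotient.mk (IsLocalRing.maximalIdeal O ^ n))))) =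
      q ^ (r * n - ∑ k : Fin r, min (lam k) n) :=
  card_ker_and_image_of_smith_normal_form_general π hπ q hq a r hrank lam u v hsnf n
end

section
/- Let O be a discrete valuation ring with field of fractions K, and let M ⊆ Mat_{d×e}(O) be an O-submodule with O-module basis (a_1, …, a_ℓ). Let Λ_1, …, Λ_ℓ be indeterminates and let F be the field of fractions of the polynomial ring K[Λ_1, …, Λ_ℓ]. Then max_{a ∈ M} rank_K(a) = rank_F(Λ_1 a_1 + ⋯ + Λ_ℓ a_ℓ), where rank_K(a) is the rank of a regarded as a matrix over K and the right-hand side is the rank of the matrix Λ_1 a_1 + ⋯ + Λ_ℓ a_ℓ over F. -/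
/-!
Over a field, the rank of a matrix is the size of its largest nonvanishing minor. The minors of
the generic element `Λ₁ a₁ + ⋯ + Λ_ℓ a_ℓ` are polynomials in the `Λᵢ` with coefficients in `O`,
and the corresponding minors of `c₁ a₁ + ⋯ + c_ℓ a_ℓ ∈ M` are their values at `c`. So no element
of `M` has rank above the generic rank. Conversely, `O` is infinite (a finite domain is a field),
so a nonzero maximal minor of the generic element does not vanish at some `c ∈ Oˡ`, and the
corresponding element of `M` attains the generic rank.
-/

open MvPolynomial

namespace Matrix

variable {m n : Type*}

theorem card_le_rank_of_det_submatrix_ne_zero [Fintype n] {R : Type*} [CommRing R] [IsDomain R]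
    {ι : Type*} [Fintype ι] [DecidableEq ι] (A : Matrix m n R) (r : ι → m) (c : ι → n)
    (h : (A.submatrix r c).det ≠ 0) : Fintype.card ι ≤ A.rank :=
  rank_of_det_ne_zero h ▸ rank_submatrix_le A r c

theorem det_submatrix_map {R S : Type*} [CommRing R] [CommRing S] {ι : Type*} [Fintype ι]
    [DecidableEq ι] (f : R →+* S) (A : Matrix m n R) (r : ι → m) (c : ι → n) :
    ((A.map f).submatrix r c).det = f (A.submatrix r c).det := by
  rw [submatrix_map, RingHom.map_det]
  rfl

variable [Fintype m] [Fintype n] {K : Type*} [Field K]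

theorem exists_linearIndependent_rows (A : Matrix m n K) :
    ∃ r : Fin A.rank → m, LinearIndependent K (A.row ∘ r) := by
  obtain ⟨κ, a, ha, hspan, hli⟩ := exists_linearIndependent' K A.row
  have : Fintype κ := Fintype.ofInjective a ha
  have hcard : Fintype.card κ = A.rank := by
    rw [rank_eq_finrank_span_row, ← hspan, finrank_span_eq_card hli]
  let e : Fin A.rank ≃ κ := (Fintype.equivFinOfCardEq hcard).symm
  exact ⟨a ∘ e, hli.comp e e.injective⟩

theorem exists_det_submatrix_fin_rank_ne_zero (A : Matrix m n K) :
    ∃ (r : Fin A.rank → m) (c : Fin A.rank → n), (A.submatrix r c).det ≠ 0 := by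
  obtain ⟨r, hr⟩ := A.exists_linearIndependent_rows
  set B := A.submatrix r id
  have hB : Bᵀ.rank = A.rank := by
    rw [rank_transpose, LinearIndependent.rank_matrix (M := B) hr, Fintype.card_fin]
  obtain ⟨c, hc⟩ := Bᵀ.exists_linearIndependent_rows
  have hc' : LinearIndependent K (Bᵀ.row ∘ c ∘ Fin.cast hB.symm) :=
    hc.comp _ (Fin.cast_injective _)
  exact ⟨r, c ∘ Fin.cast hB.symm,
    (isUnit_iff_isUnit_det _).1 (linearIndependent_cols_iff_isUnit.1 hc') |>.ne_zero⟩

theorem rank_map_le_rank_map_of_injective {R L : Type*} [CommRing R] [Field L]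
    (φ : R →+* K) {ψ : R →+* L} (hψ : Function.Injective ψ) (A : Matrix m n R) :
    (A.map φ).rank ≤ (A.map ψ).rank := by
  classical
  obtain ⟨r, c, hrc⟩ := (A.map φ).exists_det_submatrix_fin_rank_ne_zero
  rw [det_submatrix_map] at hrc
  have hA : (A.submatrix r c).det ≠ 0 := fun h => hrc (by rw [h, map_zero])
  simpa using (A.map ψ).card_le_rank_of_det_submatrix_ne_zero r c
    (by rw [det_submatrix_map]; exact (map_ne_zero_iff ψ hψ).2 hA)

theorem isGreatest_range_rank_map_eval {σ R L : Type*} [CommRing R] [IsDomain R]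
    [Infinite R] [Field L] {φ : R →+* K} (hφ : Function.Injective φ)
    {ψ : MvPolynomial σ R →+* L} (hψ : Function.Injective ψ) (A : Matrix m n (MvPolynomial σ R)) :
    IsGreatest (Set.range fun x : σ → R => (A.map (φ.comp (eval x))).rank) (A.map ψ).rank := by
  classical
  refine ⟨?_, ?_⟩
  · obtain ⟨r, c, hrc⟩ := (A.map ψ).exists_det_submatrix_fin_rank_ne_zero
    rw [det_submatrix_map, map_ne_zero_iff ψ hψ] at hrc
    obtain ⟨x, hx⟩ : ∃ x, eval x (A.submatrix r c).det ≠ 0 := by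
      by_contra! h
      exact hrc (MvPolynomial.funext fun x => by simpa using h x)
    refine ⟨x, le_antisymm (rank_map_le_rank_map_of_injective _ hψ A) ?_⟩
    simpa using (A.map (φ.comp (eval x))).card_le_rank_of_det_submatrix_ne_zero r c
      (by rw [det_submatrix_map]; exact (map_ne_zero_iff φ hφ).2 hx)
  · rintro _ ⟨x, rfl⟩
    exact rank_map_le_rank_map_of_injective _ hψ A

end Matrix

section GenericMatrix

variable {m n ι R : Type*} [Fintype ι] [CommSemiring R]

noncomputable def genericMatrix (a : ι → Matrix m n R) : Matrix m n (MvPolynomial ι R) :=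
  ∑ i, (X i : MvPolynomial ι R) • (a i).map C

theorem genericMatrix_map {S : Type*} [Semiring S] (a : ι → Matrix m n R)
    (f : MvPolynomial ι R →+* S) :
    (genericMatrix a).map f = ∑ i, f (X i) • (a i).map (f.comp C) := by
  ext j k
  simp [genericMatrix, Matrix.sum_apply]

theorem genericMatrix_map_eval (a : ι → Matrix m n R) (x : ι → R) :
    (genericMatrix a).map (eval x) = ∑ i, x i • a i := by
  ext j k
  simp [genericMatrix, Matrix.sum_apply]

end GenericMatrix

theorem Module.Basis.range_sum_smul_coe {R M ι : Type*} [Fintype ι] [Semiring R]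
    [AddCommMonoid M] [Module R M] {N : Submodule R M} (b : Module.Basis ι R N) :
    Set.range (fun x : ι → R => ∑ i, x i • (b i : M)) = N := by
  ext v
  constructor
  · rintro ⟨x, rfl⟩
    exact N.sum_mem fun i _ => N.smul_mem _ (b i).2
  · intro hv
    refine ⟨b.repr ⟨v, hv⟩, ?_⟩
    simpa only [Submodule.coe_sum, Submodule.coe_smul] using
      congrArg Subtype.val (b.sum_repr ⟨v, hv⟩)

/-- The generic element rank: for a module `M` of `d × e` matrices over a DVR `O` with
basis `a_1, …, a_ℓ`, the maximal rank over `K = Frac(O)` of an element of `M` equals the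
rank of `Λ_1 a_1 + ⋯ + Λ_ℓ a_ℓ` over the rational function field `F = Frac(K[Λ_1,…,Λ_ℓ])`. -/
theorem generic_element_rank {O : Type*} [CommRing O] [IsDomain O] [IsDiscreteValuationRing O]
    {d e ℓ : ℕ} (M : Submodule O (Matrix (Fin d) (Fin e) O))
    (b : Module.Basis (Fin ℓ) O M) :
    IsGreatest
      {k : ℕ | ∃ a ∈ M, (a.map (algebraMap O (FractionRing O))).rank = k}
      (Matrix.rank (∑ i : Fin ℓ,
        algebraMap (MvPolynomial (Fin ℓ) (FractionRing O))
            (FractionRing (MvPolynomial (Fin ℓ) (FractionRing O))) (MvPolynomial.X i) •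
          (((b i : M) : Matrix (Fin d) (Fin e) O)).map
            ((algebraMap (MvPolynomial (Fin ℓ) (FractionRing O))
                (FractionRing (MvPolynomial (Fin ℓ) (FractionRing O)))).comp
              ((MvPolynomial.C : FractionRing O →+* MvPolynomial (Fin ℓ) (FractionRing O)).comp
                (algebraMap O (FractionRing O)))))) := by
  have : Infinite O := not_finite_iff_infinite.mp fun _ =>
    IsDiscreteValuationRing.not_isField O (Finite.isField_of_domain O)
  set K := FractionRing O
  set P := MvPolynomial (Fin ℓ) K
  let ψ : MvPolynomial (Fin ℓ) O →+* FractionRing P :=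
    (algebraMap P (FractionRing P)).comp (MvPolynomial.map (algebraMap O K))
  have hψ : Function.Injective ψ :=
    (IsFractionRing.injective P _).comp (map_injective _ (IsFractionRing.injective O K))
  set a : Fin ℓ → Matrix (Fin d) (Fin e) O := fun i => b i
  have hgeneric : ∑ i, algebraMap P (FractionRing P) (X i) • (a i).map
      ((algebraMap P (FractionRing P)).comp ((C : K →+* P).comp (algebraMap O K))) =
      (genericMatrix a).map ψ := by
    have hX : ∀ i, ψ (X i) = algebraMap P (FractionRing P) (X i) := fun i =>
      congrArg (algebraMap P _) (map_X _ _)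
    have hC : ψ.comp C =
        (algebraMap P (FractionRing P)).comp ((C : K →+* P).comp (algebraMap O K)) :=
      RingHom.ext fun x => congrArg (algebraMap P _) (map_C _ _)
    rw [genericMatrix_map]
    simp only [hX, hC]
  have hranks : {k : ℕ | ∃ N ∈ M, (N.map (algebraMap O K)).rank = k} =
      Set.range fun x => ((genericMatrix a).map ((algebraMap O K).comp (eval x))).rank := by
    change (fun N : Matrix (Fin d) (Fin e) O => (N.map (algebraMap O K)).rank) ''
      (M : Set (Matrix (Fin d) (Fin e) O)) = _
    rw [← b.range_sum_smul_coe, ← Set.range_comp]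
    refine congrArg Set.range (funext fun x => ?_)
    rw [Function.comp_apply, RingHom.coe_comp, ← Matrix.map_map, genericMatrix_map_eval]
  rw [hgeneric, hranks]
  exact Matrix.isGreatest_range_rank_map_eval (IsFractionRing.injective O K) hψ _
end

section
/- Let O be a discrete valuation ring with maximal ideal 𝔪 and finite residue field of cardinality q, and let d ≥ 1. For every n ≥ 0, the average, over all diagonal d×d matrices a over O/𝔪^n, of |{x ∈ (O/𝔪^n)^d : x·a = 0}| equals (1 + n(1 - q^{-1}))^d (as a rational number). -/
/-!
The kernel of `diagonal c` is `∏ᵢ ann(cᵢ)`, so the average factors as the `d`-th power of the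
average of `|ann c|` over `c ∈ R = O/𝔪ⁿ`. Every `c ∈ R` generates an ideal `𝔪ᵐR` with `m ≤ n`;
then `|ann c| = |R| / |cR| = qᵐ`, and `c ∈ 𝔪ʲR ↔ j ≤ m`. Writing `qᵐ = 1 + ∑_{k<m} (q^{k+1} - q^k)`
and summing over `c`, the coefficient of `q^{k+1} - q^k` becomes `|𝔪^{k+1}R| = q^{n-k-1}`, so
each `k < n` contributes `qⁿ (1 - q⁻¹)`.
-/

open Finset Matrix IsLocalRing

theorem Fintype.sum_comp_eq_card_smul_add_sum_card_lt_smul {α M : Type*} [Fintype α]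
    [AddCommGroup M] (v : α → ℕ) {n : ℕ} (hv : ∀ x, v x ≤ n) (f : ℕ → M) :
    ∑ x, f (v x) =
      Fintype.card α • f 0 + ∑ k ∈ range n, #{x | k < v x} • (f (k + 1) - f k) := by
  have telescope (x : α) :
      f (v x) = f 0 + ∑ k ∈ range n, if k < v x then f (k + 1) - f k else 0 := by
    rw [← sum_filter, show {k ∈ range n | k < v x} = range (v x) by
      ext k; simp only [mem_filter, mem_range]; have := hv x; omega,
      sum_range_sub, add_sub_cancel]
  simp only [telescope, sum_add_distrib, sum_const, card_univ]
  rw [sum_comm]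
  simp only [← sum_filter, sum_const]

theorem card_annihilator_mul_card_span_singleton {R : Type*} [CommRing R] (c : R) :
    Nat.card {x : R // x * c = 0} * Nat.card (Ideal.span {c}) = Nat.card R := by
  let f := LinearMap.toSpanSingleton R R c
  rw [Submodule.card_eq_card_quotient_mul_card (LinearMap.ker f),
    Nat.card_congr f.quotKerEquivRange.toEquiv, Ideal.span, LinearMap.span_singleton_eq_range]
  rfl

section Diagonal

variable {R ι : Type*} [CommRing R] [Fintype ι] [DecidableEq ι]

theorem card_ker_vecMul_diagonal (c : ι → R) :
    Nat.card {x : ι → R | x ᵥ* diagonal c = 0} = ∏ i, Nat.card {y : R // y * c i = 0} := by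
  rw [← Nat.card_pi]
  exact Nat.card_congr <| (Equiv.subtypeEquivRight fun x => by
    simp [funext_iff, vecMul_diagonal]).trans (Equiv.subtypePiEquivPi (p := fun i y => y * c i = 0))

theorem ask_diagonal_eq_pow [Finite R] :
    ask {a : Matrix ι ι R | ∀ i j, i ≠ j → a i j = 0} =
      ((Nat.card R : ℚ)⁻¹ * ∑ᶠ c : R, (Nat.card {x : R // x * c = 0} : ℚ)) ^
        Fintype.card ι := by
  have := Fintype.ofFinite R
  let e : {a : Matrix ι ι R | ∀ i j, i ≠ j → a i j = 0} ≃ (ι → R) :=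
    { toFun a := diag a
      invFun c := ⟨diagonal c, isDiag_diagonal c⟩
      left_inv a := Subtype.ext (IsDiag.diagonal_diag a.2)
      right_inv := diag_diagonal }
  have coe_e_symm (c : ι → R) : (e.symm c : Matrix ι ι R) = diagonal c := rfl
  rw [ask, ← finsum_comp_equiv e.symm, finsum_eq_sum_of_fintype, finsum_eq_sum_of_fintype,
    Nat.card_congr e, Nat.card_fun]
  simp only [coe_e_symm, card_ker_vecMul_diagonal, Nat.cast_prod]
  rw [← Fintype.prod_sum fun _ c => (Nat.card {x : R // x * c = 0} : ℚ), prod_const, card_univ,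
    mul_pow, Nat.cast_pow, inv_pow, Nat.card_eq_fintype_card (α := ι)]

end Diagonal

section DiscreteValuationRing

variable {O : Type*} [CommRing O] [IsDomain O] [IsDiscreteValuationRing O]

theorem card_quotient_maximalIdeal_pow (k : ℕ) :
    Nat.card (O ⧸ maximalIdeal O ^ k) = Nat.card (ResidueField O) ^ k :=
  cardQuot_pow_of_prime (IsDiscreteValuationRing.not_a_field O)

theorem card_map_maximalIdeal_pow_mul {k n : ℕ} (hkn : k ≤ n) :
    Nat.card ((maximalIdeal O ^ k).map (Ideal.Quotient.mk (maximalIdeal O ^ n))) *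
      Nat.card (ResidueField O) ^ k = Nat.card (ResidueField O) ^ n := by
  rw [← card_quotient_maximalIdeal_pow, ← card_quotient_maximalIdeal_pow,
    Submodule.card_eq_card_quotient_mul_card
      ((maximalIdeal O ^ k).map (Ideal.Quotient.mk (maximalIdeal O ^ n))),
    Nat.card_congr (DoubleQuot.quotQuotEquivQuotOfLE (Ideal.pow_le_pow_right hkn)).toEquiv]

theorem exists_span_singleton_eq_map_maximalIdeal_pow {n : ℕ} (c : O ⧸ maximalIdeal O ^ n) :
    ∃ m ≤ n,
      Ideal.span {c} = (maximalIdeal O ^ m).map (Ideal.Quotient.mk (maximalIdeal O ^ n)) := by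
  obtain ⟨a, rfl⟩ := Ideal.Quotient.mk_surjective c
  rw [← Set.image_singleton, ← Ideal.map_span]
  rcases eq_or_ne (Ideal.span {a}) ⊥ with ha | ha
  · exact ⟨n, le_rfl, by rw [ha, Ideal.map_bot, Ideal.map_quotient_self]⟩
  obtain ⟨m, hm⟩ := exists_maximalIdeal_pow_eq_of_principal O
    (IsPrincipalIdealRing.principal _) _ ha
  rcases le_total m n with hmn | hnm
  · exact ⟨m, hmn, by rw [hm]⟩
  · refine ⟨n, le_rfl, ?_⟩
    rw [hm, Ideal.map_quotient_self, Ideal.map_eq_bot_iff_le_ker, Ideal.mk_ker]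
    exact Ideal.pow_le_pow_right hnm

variable [Finite (ResidueField O)]

instance finite_quotient_maximalIdeal_pow (k : ℕ) : Finite (O ⧸ maximalIdeal O ^ k) :=
  Nat.finite_of_card_ne_zero <| by
    rw [card_quotient_maximalIdeal_pow]
    exact pow_ne_zero _ Nat.card_pos.ne'

theorem card_annihilator_eq_pow {n m : ℕ} {c : O ⧸ maximalIdeal O ^ n} (hmn : m ≤ n)
    (hc : Ideal.span {c} = (maximalIdeal O ^ m).map (Ideal.Quotient.mk (maximalIdeal O ^ n))) :
    Nat.card {x // x * c = 0} = Nat.card (ResidueField O) ^ m := by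
  have hspan := card_annihilator_mul_card_span_singleton c
  rw [hc, card_quotient_maximalIdeal_pow, ← card_map_maximalIdeal_pow_mul hmn, mul_comm] at hspan
  exact Nat.eq_of_mul_eq_mul_left Nat.card_pos hspan

theorem mem_map_maximalIdeal_pow_iff {n m j : ℕ} {c : O ⧸ maximalIdeal O ^ n} (hmn : m ≤ n)
    (hc : Ideal.span {c} = (maximalIdeal O ^ m).map (Ideal.Quotient.mk (maximalIdeal O ^ n)))
    (hjn : j ≤ n) :
    c ∈ (maximalIdeal O ^ j).map (Ideal.Quotient.mk (maximalIdeal O ^ n)) ↔ j ≤ m := by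
  refine ⟨fun hj => ?_, fun hjm => ?_⟩
  · have hle := hc ▸ Ideal.span_singleton_le_iff_mem _ |>.mpr hj
    have hcard := Nat.card_le_card_of_injective _ (Submodule.inclusion_injective hle)
    have hq : 1 < Nat.card (ResidueField O) := Finite.one_lt_card_iff_nontrivial.mpr inferInstance
    rw [← Nat.pow_le_pow_iff_right hq]
    refine Nat.le_of_mul_le_mul_left ?_
      (Nat.card_pos (α := (maximalIdeal O ^ j).map (Ideal.Quotient.mk (maximalIdeal O ^ n))))
    rw [card_map_maximalIdeal_pow_mul hjn, ← card_map_maximalIdeal_pow_mul hmn]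
    exact Nat.mul_le_mul_right _ hcard
  · exact Ideal.map_mono (Ideal.pow_le_pow_right hjm) (hc ▸ Ideal.mem_span_singleton_self c)

theorem average_card_annihilator (n : ℕ) :
    (Nat.card (O ⧸ maximalIdeal O ^ n) : ℚ)⁻¹ *
        ∑ᶠ c : O ⧸ maximalIdeal O ^ n, (Nat.card {x // x * c = 0} : ℚ) =
      1 + n * (1 - (Nat.card (ResidueField O) : ℚ)⁻¹) := by
  set q := Nat.card (ResidueField O)
  have hq : (q : ℚ) ≠ 0 := Nat.cast_ne_zero.mpr Nat.card_pos.ne'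
  have := Fintype.ofFinite (O ⧸ maximalIdeal O ^ n)
  choose v hvn hv using exists_span_singleton_eq_map_maximalIdeal_pow (O := O) (n := n)
  have layer {k : ℕ} (hk : k < n) :
      #{c | k < v c} • ((q : ℚ) ^ (k + 1) - q ^ k) = q ^ n * (1 - (q : ℚ)⁻¹) := by
    have hcard : #{c | k < v c} * q ^ (k + 1) = q ^ n := by
      rw [← Fintype.card_subtype, ← Nat.card_eq_fintype_card,
        ← card_map_maximalIdeal_pow_mul hk]
      congr 1
      exact Nat.card_congr <| Equiv.subtypeEquivRight fun c =>
        (mem_map_maximalIdeal_pow_iff (hvn c) (hv c) hk).symm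
    have hcard' : (#{c | k < v c} : ℚ) * q ^ (k + 1) = q ^ n := by exact_mod_cast hcard
    rw [nsmul_eq_mul, ← hcard']
    field_simp
    ring
  rw [finsum_eq_sum_of_fintype, Nat.card_eq_fintype_card]
  simp only [card_annihilator_eq_pow (hvn _) (hv _), Nat.cast_pow]
  rw [Fintype.sum_comp_eq_card_smul_add_sum_card_lt_smul v hvn (fun k => (q : ℚ) ^ k),
    sum_congr rfl fun k hk => layer (mem_range.mp hk)]
  have hcard : (Fintype.card (O ⧸ maximalIdeal O ^ n) : ℚ) = q ^ n := by
    rw [← Nat.card_eq_fintype_card, card_quotient_maximalIdeal_pow, Nat.cast_pow]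
  rw [nsmul_eq_mul, hcard, sum_const, card_range, nsmul_eq_mul, pow_zero]
  field_simp

end DiscreteValuationRing

theorem ask_diagonal_general {O : Type*} [CommRing O] [IsDomain O] [IsDiscreteValuationRing O]
    [Finite (IsLocalRing.ResidueField O)]
    (q : ℕ) (hq : Nat.card (IsLocalRing.ResidueField O) = q)
    (d : ℕ) (n : ℕ) :
    ask {a : Matrix (Fin d) (Fin d) (O ⧸ IsLocalRing.maximalIdeal O ^ n) |
        ∀ i j : Fin d, i ≠ j → a i j = 0} =
      (1 + (n : ℚ) * (1 - (q : ℚ)⁻¹)) ^ d := by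
  subst hq
  rw [ask_diagonal_eq_pow, Fintype.card_fin, average_card_annihilator]

/-- The average size of the kernel over the diagonal `d × d` matrices over `O/𝔪^n`
equals `(1 + n(1 - q⁻¹))^d`. -/
theorem ask_diagonal {O : Type*} [CommRing O] [IsDomain O] [IsDiscreteValuationRing O]
    [Finite (IsLocalRing.ResidueField O)]
    (q : ℕ) (hq : Nat.card (IsLocalRing.ResidueField O) = q)
    (d : ℕ) (hd : 1 ≤ d) (n : ℕ) :
    ask {a : Matrix (Fin d) (Fin d) (O ⧸ IsLocalRing.maximalIdeal O ^ n) |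
        ∀ i j : Fin d, i ≠ j → a i j = 0} =
      (1 + (n : ℚ) * (1 - (q : ℚ)⁻¹)) ^ d :=
  ask_diagonal_general q hq d n
end
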